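/- arXiv:1806.09825 — 3 statements merged into one kernel-verified Lean document; each statement's English description precedes it below -/
import Mathlib

section
/- For every g ≥ 1, the 2×2 algebraic system arising from the commutativity analysis has the following explicit solution: if coefficients q^g_{i,j} (for i+j = 2g, symmetric in i,j) and b̃^g_{i,j} (for i+j = 2g−1, antisymmetric) satisfy, for 1 ≤ i ≤ g with j = 2g−i, the relation q^g_{0,2g}·( (1/2)·C(2g+2, i+1) − C(2g+1, i) ) + (1/4)(b̃^g_{j,i−1} + b̃^g_{j−1,i}) = 0 together with b̃^g_{0,2g−1} = 2g·q^g_{2g,0} and q^g_{0,2g} = q^g_{2g,0}, then b̃^g_{i,j} = (2·C(2g, i+1) − 2·C(2g, i) + (−1)^{i+1}(2g−2))·q^g_{0,2g} for all 0 ≤ i ≤ 2g−1, j = 2g−1−i, satisfies these relations (where C(n,k) denotes the binomial coefficient). -/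
/-- for `g ≥ 1`, the closed formula
`b̃^g_{i,2g−1−i} = (2·C(2g,i+1) − 2·C(2g,i) + (−1)^{i+1}(2g−2))·q^g_{0,2g}`
solves the linear system from the commutativity analysis: it satisfies
`b̃^g_{0,2g−1} = 2g·q^g_{2g,0}` (with `q^g_{2g,0} = q^g_{0,2g} = Q`) and, for
`1 ≤ i ≤ g`, `j = 2g−i`,
`Q·((1/2)C(2g+2,i+1) − C(2g+1,i)) + (1/4)(b̃^g_{j,i−1} + b̃^g_{j−1,i}) = 0`. -/
theorem btilde_solves_linear_system (g : ℕ) (hg : 1 ≤ g) (Q : ℚ) :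
    let B : ℕ → ℚ := fun i =>
      (2 * (Nat.choose (2 * g) (i + 1) : ℚ) - 2 * (Nat.choose (2 * g) i : ℚ) +
          (-1) ^ (i + 1) * (2 * (g : ℚ) - 2)) * Q
    B 0 = 2 * (g : ℚ) * Q ∧
      ∀ i : ℕ, 1 ≤ i → i ≤ g →
        Q * ((1 / 2) * (Nat.choose (2 * g + 2) (i + 1) : ℚ) -
              (Nat.choose (2 * g + 1) i : ℚ)) +
            (1 / 4) * (B (2 * g - i) + B (2 * g - i - 1)) = 0 := by
  intro B
  constructor
  · show (2 * (Nat.choose (2 * g) 1 : ℚ) - 2 * (Nat.choose (2 * g) 0 : ℚ) +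
        (-1) ^ (0 + 1) * (2 * (g : ℚ) - 2)) * Q = 2 * (g : ℚ) * Q
    rw [Nat.choose_one_right, Nat.choose_zero_right]
    push_cast
    ring
  · intro i h1 h2
    obtain ⟨k, rfl⟩ : ∃ k, i = k + 1 := ⟨i - 1, by omega⟩
    have e1 : 2 * g - (k + 1) + 1 = 2 * g - k := by omega
    have e2 : 2 * g - (k + 1) - 1 + 1 = 2 * g - (k + 1) := by omega
    have c1 : Nat.choose (2 * g) (2 * g - k) = Nat.choose (2 * g) k :=
      Nat.choose_symm (by omega)
    have c2 : Nat.choose (2 * g) (2 * g - (k + 1)) = Nat.choose (2 * g) (k + 1) :=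
      Nat.choose_symm (by omega)
    have c3 : Nat.choose (2 * g) (2 * g - (k + 1) - 1) = Nat.choose (2 * g) (k + 2) := by
      rw [show 2 * g - (k + 1) - 1 = 2 * g - (k + 2) by omega]
      exact Nat.choose_symm (by omega)
    have p1 : Nat.choose (2 * g + 2) (k + 1 + 1) =
        Nat.choose (2 * g + 1) (k + 1) + Nat.choose (2 * g + 1) (k + 1 + 1) :=
      Nat.choose_succ_succ _ _
    have p2 : Nat.choose (2 * g + 1) (k + 1 + 1) =
        Nat.choose (2 * g) (k + 1) + Nat.choose (2 * g) (k + 1 + 1) :=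
      Nat.choose_succ_succ _ _
    have p3 : Nat.choose (2 * g + 1) (k + 1) =
        Nat.choose (2 * g) k + Nat.choose (2 * g) (k + 1) :=
      Nat.choose_succ_succ _ _
    show Q * ((1 / 2) * (Nat.choose (2 * g + 2) (k + 1 + 1) : ℚ) -
          (Nat.choose (2 * g + 1) (k + 1) : ℚ)) +
        (1 / 4) * ((2 * (Nat.choose (2 * g) (2 * g - (k + 1) + 1) : ℚ) -
            2 * (Nat.choose (2 * g) (2 * g - (k + 1)) : ℚ) +
            (-1) ^ (2 * g - (k + 1) + 1) * (2 * (g : ℚ) - 2)) * Q +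
          (2 * (Nat.choose (2 * g) (2 * g - (k + 1) - 1 + 1) : ℚ) -
            2 * (Nat.choose (2 * g) (2 * g - (k + 1) - 1) : ℚ) +
            (-1) ^ (2 * g - (k + 1) - 1 + 1) * (2 * (g : ℚ) - 2)) * Q) = 0
    rw [e2, e1, c1, c2, c3, p1, p2, p3,
      show 2 * g - k = 2 * g - (k + 1) + 1 from by omega, pow_succ]
    push_cast
    ring
end

section
/- Let R̂(z) = (2/(iz))·(e^{iz}−1)/(e^{iz}+1) = (2/z)·tan(z/2), regarded as a formal power series in z² with rational coefficients (R̂(z) = 1 + z²/12 + ⋯). Then the formal power series T̂(z) = √(R̂(z)) (the unique power series with constant term 1 whose square is R̂) satisfies the ordinary differential equation dT̂/dz = (1/z)·(−1/2 + (1/2)R̂^{−1} + (z²/8)·R̂)·T̂. -/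
/-!
Differentiating `z R̂ = 2 tan(z/2)` and using `tan' = 1 + tan²` gives the Riccati equation
`z R̂' = 1 − R̂ + z² R̂² / 4`. Differentiating `T̂² = R̂` gives `2 R̂ T̂' = R̂' T̂`, so
`z T̂' = (z R̂' / (2 R̂)) T̂`, and the Riccati equation turns this into the claimed ODE.
-/

open PowerSeries

namespace Derivation

variable {k A : Type*} [CommSemiring k] [CommRing A] [Algebra k A] (D : Derivation k A A)

theorem two_mul_mul_apply_of_sq_eq {T S : A} (hT : T ^ 2 = S) : 2 * S * D T = D S * T := by
  have hS : D S = 2 * T * D T := by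
    rw [← hT, leibniz_pow]
    simp only [nsmul_eq_mul, smul_eq_mul]
    ring
  rw [hS, ← hT]
  ring

/-- For `D = d/dz`, `x = z`, `t = tan(z/2)` and `R = (2/z) tan(z/2)`. -/
theorem four_mul_mul_apply_of_riccati {x t R : A} (hx : D x = 1)
    (ht : 2 * D t = 1 + t ^ 2) (hR : x * R = 2 * t) :
    4 * (x * D R) = 4 * (1 - R) + x ^ 2 * R ^ 2 := by
  have hdR : R + x * D R = 1 + t ^ 2 := by
    have h := congrArg D hR
    rw [leibniz, two_mul, map_add, smul_eq_mul, smul_eq_mul, hx] at h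
    linear_combination h + ht
  linear_combination 4 * hdR - hR * (x * R + 2 * t)

end Derivation

theorem sqrt_R_ode_general (t R T : PowerSeries ℚ)
    (ht : PowerSeries.derivative ℚ t = C (1 / 2) * (1 + t ^ 2))
    (hR : X * R = C 2 * t)
    (hR0 : constantCoeff R = 1)
    (hT : T ^ 2 = R) :
    X * PowerSeries.derivative ℚ T =
      (C (-(1 / 2)) + C (1 / 2) * R⁻¹ + C (1 / 8) * X ^ 2 * R) * T := by
  have hC2 : (C 2 : ℚ⟦X⟧) = 2 := map_ofNat C 2
  have ht' : 2 * derivative ℚ t = 1 + t ^ 2 := by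
    rw [ht, ← mul_assoc, ← hC2, ← map_mul]; norm_num
  rw [hC2] at hR
  have hriccati := (derivative ℚ).four_mul_mul_apply_of_riccati derivative_X ht' hR
  have hsqrt := (derivative ℚ).two_mul_mul_apply_of_sq_eq hT
  have hRinv : R⁻¹ * R = 1 := PowerSeries.inv_mul_cancel R (by simp [hR0])
  have key : 8 * (X * derivative ℚ T) = (-4 + 4 * R⁻¹ + X ^ 2 * R) * T := by
    linear_combination (-8 * X * derivative ℚ T - 4 * T + X ^ 2 * R * T) * hRinv
      + 4 * R⁻¹ * X * hsqrt + R⁻¹ * T * hriccati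
  have h8 : C (1 / 8 : ℚ) * 8 = 1 := by rw [← map_ofNat C 8, ← map_mul]; norm_num
  have h4 : C (1 / 2 : ℚ) = 4 * C (1 / 8) := by rw [← map_ofNat C 4, ← map_mul]; norm_num
  have hneg : C (-(1 / 2) : ℚ) = -4 * C (1 / 8) := by
    rw [← map_ofNat C 4, ← map_neg, ← map_mul]; norm_num
  rw [hneg, h4]
  linear_combination C (1 / 8) * key - X * derivative ℚ T * h8

/-- let `t = tan(z/2) ∈ ℚ[[z]]` (characterized by `t(0) = 0`,
`t' = (1 + t²)/2`), `R̂ = (2/z)·t` (so `z·R̂ = 2t`, `R̂(0) = 1`) and `T̂ = √R̂`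
(the unique square root with constant term 1). Then
`dT̂/dz = (1/z)·(−1/2 + (1/2)R̂⁻¹ + (z²/8)R̂)·T̂`, stated after multiplying by `z`. -/
theorem sqrt_R_ode (t R T : PowerSeries ℚ)
    (ht0 : constantCoeff t = 0)
    (ht : PowerSeries.derivative ℚ t = C (1 / 2) * (1 + t ^ 2))
    (hR : X * R = C 2 * t)
    (hR0 : constantCoeff R = 1)
    (hT : T ^ 2 = R)
    (hT0 : constantCoeff T = 1) :
    X * PowerSeries.derivative ℚ T =
      (C (-(1 / 2)) + C (1 / 2) * R⁻¹ + C (1 / 8) * X ^ 2 * R) * T :=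
  sqrt_R_ode_general t R T ht hR hR0 hT
end

section
/- Let r ∈ A be a differential polynomial in two variable families u_n, w_n (n ≥ 0) over ℂ, homogeneous of some fixed differential degree p ≥ 0 (deg u_i = deg w_i = i), with positive homogeneity degree in the u-variables (i.e. every monomial of r contains at least one u_n). If r satisfies ∑_{n≥0} (∂r/∂w_n)·∂_x^n(w·w_x) − w·∂_x r = 0, then r = 0. -/
open MvPolynomial

/-! Differential polynomials in two variables `u, w` over ℂ: elements of
`ℂ[[u₀,w₀]][u₁,w₁,u₂,w₂,…]`, modeled as `MvPolynomial (Fin 2 × ℕ) (MvPowerSeries (Fin 2) ℂ)`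
where the variable `X (i,n)` stands for `u_{n+1}` (if `i = 0`) or `w_{n+1}` (if `i = 1`),
and the coefficient ring consists of power series in `u₀, w₀`. -/

/-- The ring of differential polynomials in two variables. -/
abbrev DiffPoly2 := MvPolynomial (Fin 2 × ℕ) (MvPowerSeries (Fin 2) ℂ)

/-- Partial derivative of a power series in `u₀,w₀` with respect to the `i`-th variable. -/
noncomputable def mvDeriv (i : Fin 2) (f : MvPowerSeries (Fin 2) ℂ) :
    MvPowerSeries (Fin 2) ℂ :=
  fun e => (e i + 1) • MvPowerSeries.coeff (e + Finsupp.single i 1) f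

/-- `∂/∂u₀` (for `i = 0`) resp. `∂/∂w₀` (for `i = 1`) on differential polynomials. -/
noncomputable def dV0 (i : Fin 2) (p : DiffPoly2) : DiffPoly2 :=
  p.support.sum fun m => monomial m (mvDeriv i (coeff m p))

/-- The total `x`-derivative `∂_x`, determined by `∂_x u_n = u_{n+1}`, `∂_x w_n = w_{n+1}`. -/
noncomputable def dX2 (p : DiffPoly2) : DiffPoly2 :=
  (∑ i : Fin 2, X (i, 0) * dV0 i p) + ∑ v ∈ p.vars, pderiv v p * X (v.1, v.2 + 1)

/-- The partial linearization along the `i`-th variable family: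
`∑_{n≥0} (∂q/∂(u or w)_n) ∂_x^n g`. -/
noncomputable def lin2 (i : Fin 2) (q g : DiffPoly2) : DiffPoly2 :=
  dV0 i q * g + ∑ v ∈ q.vars.filter (fun v => v.1 = i), pderiv v q * dX2^[v.2 + 1] g

/-- The element `u₀`. -/
noncomputable def uu : DiffPoly2 := MvPolynomial.C (MvPowerSeries.X 0)

/-- The element `w₀`. -/
noncomputable def ww : DiffPoly2 := MvPolynomial.C (MvPowerSeries.X 1)

/-! Apply `∂/∂u_{n+1}` to the equation, where `u_{n+1}` does not occur in `r`. The linearization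
term is built from `r`, its partial derivatives and the iterated `x`-derivatives of `w w_x`, none
of which involves `u_{n+1}`, so it is killed, and since `∂/∂u_{n+1} ∘ ∂_x = ∂/∂u_n` on such `r`
what remains is `w ∂r/∂u_n = 0`. By descending induction on `n`, no `u_{n+1}` occurs in `r`, and
then `∂r/∂u₀ = 0`: `r` involves no `u` at all, which the positive `u`-degree allows only for
`r = 0`. -/

namespace MvPolynomial

variable {σ R : Type*} [CommSemiring R]

theorem vars_pderiv_subset (i : σ) (p : MvPolynomial σ R) : (pderiv i p).vars ⊆ p.vars := by
  intro x hx
  obtain ⟨m, hm, hxm⟩ := (mem_vars_iff_mem_support x).1 hx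
  refine (mem_vars_iff_mem_support x).2 ⟨m + Finsupp.single i 1, ?_, ?_⟩
  · rw [mem_support_iff, coeff_pderiv] at hm
    exact mem_support_iff.2 (left_ne_zero_of_mul hm)
  · simp only [Finsupp.mem_support_iff, Finsupp.add_apply] at hxm ⊢
    omega

theorem pderiv_ne_zero_of_mem_vars [NoZeroDivisors R] [CharZero R] {i : σ}
    {p : MvPolynomial σ R} (h : i ∈ p.vars) : pderiv i p ≠ 0 := by
  obtain ⟨m, hm, him⟩ := (mem_vars_iff_mem_support i).1 h
  have hle : Finsupp.single i 1 ≤ m :=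
    Finsupp.single_le_iff.2 (Nat.one_le_iff_ne_zero.2 (Finsupp.mem_support_iff.1 him))
  intro h0
  have hcoeff := coeff_pderiv (i := i) p (m - Finsupp.single i 1)
  rw [h0, coeff_zero, tsub_add_cancel_of_le hle] at hcoeff
  exact mem_support_iff.1 hm ((mul_eq_zero.1 hcoeff.symm).resolve_right
    (Nat.cast_add_one_ne_zero _))

end MvPolynomial

namespace MvPowerSeries

variable {σ R : Type*} [CommSemiring R]

instance [CharZero R] : CharZero (MvPowerSeries σ R) := (constantCoeff (σ := σ) (R := R)).charZero

theorem pderiv_comm (i j : σ) (f : MvPowerSeries σ R) :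
    pderiv R i (pderiv R j f) = pderiv R j (pderiv R i f) := by
  ext n
  simp only [coeff_pderiv]
  rcases eq_or_ne i j with rfl | hij
  · rfl
  · simp [hij, hij.symm, add_right_comm]
    ring

theorem coeff_eq_zero_of_pderiv_eq_zero [NoZeroDivisors R] [CharZero R] {i : σ}
    {f : MvPowerSeries σ R} (hf : pderiv R i f = 0) {e : σ →₀ ℕ} (he : e i ≠ 0) :
    coeff e f = 0 := by
  have hcoeff := coeff_pderiv (R := R) (i := i) f (e - Finsupp.single i 1)
  rw [hf, map_zero, tsub_add_cancel_of_le (Finsupp.single_le_iff.2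
    (Nat.one_le_iff_ne_zero.2 he))] at hcoeff
  exact (mul_eq_zero.1 hcoeff.symm).resolve_right (Nat.cast_add_one_ne_zero _)

end MvPowerSeries

theorem mvDeriv_eq_pderiv (i : Fin 2) : mvDeriv i = MvPowerSeries.pderiv ℂ i := by
  funext f
  ext e
  rw [MvPowerSeries.coeff_pderiv, mul_comm, ← Nat.cast_succ, ← nsmul_eq_mul]
  rfl

theorem coeff_dV0 (i : Fin 2) (q : DiffPoly2) (m : (Fin 2 × ℕ) →₀ ℕ) :
    coeff m (dV0 i q) = MvPowerSeries.pderiv ℂ i (coeff m q) := by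
  rw [dV0, coeff_sum, Finset.sum_eq_single m (fun m' _ hne => by simp [coeff_monomial, hne])
    (fun hm => by simp [notMem_support_iff.1 hm, mvDeriv_eq_pderiv])]
  simp [mvDeriv_eq_pderiv]

theorem vars_dV0_subset (i : Fin 2) (q : DiffPoly2) : (dV0 i q).vars ⊆ q.vars := by
  intro v hv
  obtain ⟨m, hm, hvm⟩ := (mem_vars_iff_mem_support v).1 hv
  refine (mem_vars_iff_mem_support v).2 ⟨m, ?_, hvm⟩
  rw [mem_support_iff, coeff_dV0] at hm
  exact mem_support_iff.2 fun h => hm (by rw [h, map_zero])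

/-- Differential polynomials in `w` alone. -/
def wPoly : Subsemiring DiffPoly2 where
  carrier := {q | q ∈ supported _ {v : Fin 2 × ℕ | v.1 = 1} ∧
    ∀ m, MvPowerSeries.pderiv ℂ 0 (coeff m q) = 0}
  zero_mem' := ⟨zero_mem _, by simp⟩
  one_mem' := ⟨one_mem _, fun m => by rw [coeff_one]; split_ifs <;> simp⟩
  add_mem' ha hb := ⟨add_mem ha.1 hb.1, fun m => by rw [coeff_add, map_add, ha.2, hb.2, add_zero]⟩
  mul_mem' {a b} ha hb := ⟨mul_mem ha.1 hb.1, fun m => by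
    rw [coeff_mul, map_sum]
    exact Finset.sum_eq_zero fun x _ => by simp [ha.2, hb.2]⟩

theorem X_one_mem_wPoly (n : ℕ) : X (1, n) ∈ wPoly :=
  ⟨X_mem_supported.2 rfl, fun m => by rw [coeff_X]; split_ifs <;> simp⟩

theorem ww_mem_wPoly : ww ∈ wPoly :=
  ⟨by simp [ww, mem_supported], fun m => by
    rw [ww, coeff_C]; split_ifs <;> simp [MvPowerSeries.pderiv_X_of_ne]⟩

theorem dV0_zero_eq_zero_of_mem_wPoly {q : DiffPoly2} (hq : q ∈ wPoly) : dV0 0 q = 0 := by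
  ext1 m
  rw [coeff_dV0, hq.2, coeff_zero]

theorem fst_eq_one_of_mem_vars {q : DiffPoly2} (hq : q ∈ wPoly) {v : Fin 2 × ℕ}
    (hv : v ∈ q.vars) : v.1 = 1 :=
  mem_supported.1 hq.1 hv

theorem pderiv_mem_wPoly (v : Fin 2 × ℕ) {q : DiffPoly2} (hq : q ∈ wPoly) : pderiv v q ∈ wPoly :=
  ⟨mem_supported.2 ((Finset.coe_subset.2 (vars_pderiv_subset v q)).trans (mem_supported.1 hq.1)),
    fun m => by simp [coeff_pderiv, hq.2]⟩

theorem dV0_one_mem_wPoly {q : DiffPoly2} (hq : q ∈ wPoly) : dV0 1 q ∈ wPoly :=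
  ⟨mem_supported.2 ((Finset.coe_subset.2 (vars_dV0_subset 1 q)).trans (mem_supported.1 hq.1)),
    fun m => by rw [coeff_dV0, MvPowerSeries.pderiv_comm, hq.2, map_zero]⟩

theorem dX2_mem_wPoly {q : DiffPoly2} (hq : q ∈ wPoly) : dX2 q ∈ wPoly := by
  rw [dX2, Fin.sum_univ_two, dV0_zero_eq_zero_of_mem_wPoly hq, mul_zero, zero_add]
  refine add_mem (mul_mem (X_one_mem_wPoly 0) (dV0_one_mem_wPoly hq))
    (sum_mem fun v hv => mul_mem (pderiv_mem_wPoly v hq) ?_)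
  rw [fst_eq_one_of_mem_vars hq hv]
  exact X_one_mem_wPoly _

theorem iterate_dX2_mem_wPoly {g : DiffPoly2} (hg : g ∈ wPoly) (k : ℕ) : dX2^[k] g ∈ wPoly := by
  induction k with
  | zero => exact hg
  | succ k ih => rw [Function.iterate_succ_apply']; exact dX2_mem_wPoly ih

theorem pderiv_lin2_eq_zero {v : Fin 2 × ℕ} {i : Fin 2} {q g : DiffPoly2} (hq : v ∉ q.vars)
    (hg : ∀ k, v ∉ (dX2^[k] g).vars) : pderiv v (lin2 i q g) = 0 := by
  have hfree : ∀ p : DiffPoly2, v ∉ p.vars → p ∈ supported _ ({v}ᶜ : Set (Fin 2 × ℕ)) :=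
    fun p hp => mem_supported.2 (Set.subset_compl_singleton_iff.2 hp)
  refine pderiv_eq_zero_of_notMem_vars fun hv => Set.subset_compl_singleton_iff.1
    (mem_supported.1 ?_) hv
  exact add_mem (mul_mem (hfree _ fun h => hq (vars_dV0_subset i q h)) (hfree _ (hg 0)))
    (sum_mem fun w _ => mul_mem (hfree _ fun h => hq (vars_pderiv_subset w q h)) (hfree _ (hg _)))

theorem pderiv_succ_dX2 {i : Fin 2} {n : ℕ} {r : DiffPoly2} (h : (i, n + 1) ∉ r.vars) :
    pderiv (i, n + 1) (dX2 r) = pderiv (i, n) r := by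
  have hdV0 : ∀ j, pderiv (i, n + 1) (dV0 j r) = 0 :=
    fun j => pderiv_eq_zero_of_notMem_vars fun h' => h (vars_dV0_subset j r h')
  have hpderiv : ∀ v, pderiv (i, n + 1) (pderiv v r) = 0 :=
    fun v => pderiv_eq_zero_of_notMem_vars fun h' => h (vars_pderiv_subset v r h')
  have hshift : ∀ x : Fin 2 × ℕ, ((x.1, x.2 + 1) = (i, n + 1)) = (x = (i, n)) := by
    simp [Prod.ext_iff]
  simp only [dX2, map_add, map_sum, pderiv_mul, hdV0, hpderiv, pderiv_X, Pi.single_apply, hshift]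
  simp only [Prod.mk.injEq, Nat.right_eq_add, Nat.add_eq_zero_iff, one_ne_zero, and_false,
    ↓reduceIte, zero_mul, mul_zero, add_zero, Finset.sum_const_zero, mul_ite, mul_one, zero_add,
    Finset.sum_ite_eq', ite_eq_left_iff]
  exact fun hv => (pderiv_eq_zero_of_notMem_vars hv).symm

theorem pderiv_zero_dX2 {i : Fin 2} {r : DiffPoly2} (h : (i, 0) ∉ r.vars) :
    pderiv (i, 0) (dX2 r) = dV0 i r := by
  have hdV0 : ∀ j, pderiv (i, 0) (dV0 j r) = 0 :=
    fun j => pderiv_eq_zero_of_notMem_vars fun h' => h (vars_dV0_subset j r h')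
  have hpderiv : ∀ v, pderiv (i, 0) (pderiv v r) = 0 :=
    fun v => pderiv_eq_zero_of_notMem_vars fun h' => h (vars_pderiv_subset v r h')
  simp only [dX2, map_add, map_sum, pderiv_mul, hdV0, hpderiv, pderiv_X, Pi.single_apply]
  simp

theorem ww_ne_zero : ww ≠ 0 := by
  rw [ww, Ne, C_eq_zero]
  exact fun h => by simpa using congrArg (MvPowerSeries.coeff (Finsupp.single 1 1)) h

theorem pderiv_dX2_eq_zero_of_notMem_vars {r : DiffPoly2}
    (heq : lin2 1 r (ww * X (1, 0)) - ww * dX2 r = 0) {n : ℕ} (hn : (0, n) ∉ r.vars) :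
    pderiv (0, n) (dX2 r) = 0 := by
  have hg : ∀ k, ((0 : Fin 2), n) ∉ (dX2^[k] (ww * X (1, 0))).vars := fun k hk =>
    zero_ne_one (fst_eq_one_of_mem_vars
      (iterate_dX2_mem_wPoly (mul_mem ww_mem_wPoly (X_one_mem_wPoly 0)) k) hk)
  have h := congrArg (pderiv ((0 : Fin 2), n)) heq
  rw [map_sub, pderiv_lin2_eq_zero hn hg, ww, pderiv_C_mul, map_zero, zero_sub, neg_eq_zero,
    ← ww] at h
  exact (mul_eq_zero.1 h).resolve_left ww_ne_zero

theorem notMem_vars_of_succ_notMem_vars {r : DiffPoly2}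
    (heq : lin2 1 r (ww * X (1, 0)) - ww * dX2 r = 0) {n : ℕ} (hn : (0, n + 1) ∉ r.vars) :
    ((0 : Fin 2), n) ∉ r.vars := fun h =>
  pderiv_ne_zero_of_mem_vars h
    (pderiv_succ_dX2 hn ▸ pderiv_dX2_eq_zero_of_notMem_vars heq hn)

theorem u_notMem_vars {r : DiffPoly2} (heq : lin2 1 r (ww * X (1, 0)) - ww * dX2 r = 0)
    (n : ℕ) : ((0 : Fin 2), n) ∉ r.vars := by
  have hfin : {n | ((0 : Fin 2), n) ∈ r.vars}.Finite :=
    r.vars.finite_toSet.preimage (Prod.mk_right_injective 0).injOn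
  exact Nat.decreasing_induction_of_infinite (fun n => notMem_vars_of_succ_notMem_vars heq)
    hfin.infinite_compl n

theorem dV0_zero_eq_zero {r : DiffPoly2} (heq : lin2 1 r (ww * X (1, 0)) - ww * dX2 r = 0) :
    dV0 0 r = 0 :=
  pderiv_zero_dX2 (u_notMem_vars heq 0) ▸
    pderiv_dX2_eq_zero_of_notMem_vars heq (u_notMem_vars heq 0)

theorem diffpoly_uniqueness_two_var_general (r : DiffPoly2)
    (hu : ∀ m ∈ r.support, ∀ e : Fin 2 →₀ ℕ,
      MvPowerSeries.coeff e (coeff m r) ≠ 0 →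
      1 ≤ e 0 + ∑ v ∈ m.support.filter (fun v => v.1 = 0), m v)
    (heq : lin2 1 r (ww * X (1, 0)) - ww * dX2 r = 0) :
    r = 0 := by
  ext m e
  by_contra hne
  rw [coeff_zero, map_zero] at hne
  have hm : m ∈ r.support := mem_support_iff.2 fun h => hne (by rw [h, map_zero])
  have hno_u : m.support.filter (fun v => v.1 = 0) = ∅ :=
    Finset.filter_eq_empty_iff.2 fun v hv hv0 =>
      u_notMem_vars heq v.2 (hv0 ▸ (mem_vars_iff_mem_support v).2 ⟨m, hm, hv⟩)
  have he : 1 ≤ e 0 := by simpa [hno_u] using hu m hm e hne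
  have hcoeff : MvPowerSeries.pderiv ℂ 0 (coeff m r) = 0 := by
    rw [← coeff_dV0, dV0_zero_eq_zero heq, coeff_zero]
  exact hne (MvPowerSeries.coeff_eq_zero_of_pderiv_eq_zero hcoeff (Nat.one_le_iff_ne_zero.1 he))

/-- if `r` is a differential polynomial in `u, w`, homogeneous of
differential degree `p` (`deg u_i = deg w_i = i`), every monomial of which contains
at least one `u`-factor, and `∑_{n≥0} (∂r/∂w_n)·∂_x^n(w·w_x) − w·∂_x r = 0`,
then `r = 0`. -/
theorem diffpoly_uniqueness_two_var (p : ℕ) (r : DiffPoly2)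
    (hhom : IsWeightedHomogeneous (fun v : Fin 2 × ℕ => v.2 + 1) r p)
    (hu : ∀ m ∈ r.support, ∀ e : Fin 2 →₀ ℕ,
      MvPowerSeries.coeff e (coeff m r) ≠ 0 →
      1 ≤ e 0 + ∑ v ∈ m.support.filter (fun v => v.1 = 0), m v)
    (heq : lin2 1 r (ww * X (1, 0)) - ww * dX2 r = 0) :
    r = 0 :=
  diffpoly_uniqueness_two_var_general r hu heq
end
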